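/- arXiv:1407.0917 — 5 statements merged into one kernel-verified Lean document; each statement's English description precedes it below -/
import Mathlib

section
/- Let φ be a real-linear map on 2×2 Hermitian matrices satisfying det[φ(A),φ(B)] = det[A,B] for all Hermitian A, B. Then there exist a unitary or antiunitary operator U on ℂ², a sign ε ∈ {+1,−1}, and a real-linear functional f such that φ(A) = ε·UAU* + f(A)·I for all Hermitian A. -/
/-!
Write a Hermitian `A` as `t • 1 + a₀σ₁ + a₁σ₂ + a₂σ₃` with `a ∈ ℝ³`. Then `[A, B] = 2i (a × b)·σ`,
so `det [A, B] = 4 ‖a × b‖²`, and the hypothesis says that the linear map `S` induced by `φ` on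
the traceless parts satisfies `‖Sa × Sb‖ = ‖a × b‖`. Since `Sa × Sb = adj(S)ᵀ (a × b)` and every
vector is a cross product, `adj(S)ᵀ` is orthogonal, which forces `S = ε R` with `ε = det S = ±1`
and `R ∈ SO(3)`; as `S` is onto, `φ(1)` has no traceless part. Finally every rotation is
implemented by a unitary, `U (a·σ) U* = (Ra)·σ`: take for `U` the columns `v, Xv`, where
`X = (Re₁)·σ` and `v` is a unit eigenvector of `(Re₃)·σ` for the eigenvalue `1`. The sign `ε`
absorbs orientation reversal, so the unitary alternative always holds.
-/

open Matrix Complex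

lemma crossProduct_mulVec_mulVec {R : Type*} [CommRing R] (M : Matrix (Fin 3) (Fin 3) R)
    (a b : Fin 3 → R) : (M *ᵥ a) ⨯₃ (M *ᵥ b) = M.adjugateᵀ *ᵥ (a ⨯₃ b) := by
  ext i; fin_cases i <;>
    simp [cross_apply, mulVec, adjugate_fin_three, vec3_dotProduct] <;> ring

lemma crossProduct_mulVec_mulVec_of_mem_specialOrthogonalGroup {R : Type*} [CommRing R]
    {M : Matrix (Fin 3) (Fin 3) R} (hM : M ∈ specialOrthogonalGroup (Fin 3) R)
    (a b : Fin 3 → R) : (M *ᵥ a) ⨯₃ (M *ᵥ b) = M *ᵥ (a ⨯₃ b) := by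
  obtain ⟨hMo, hdet⟩ := mem_specialOrthogonalGroup_iff.mp hM
  have hadj : M.adjugate = Mᵀ := by
    calc M.adjugate = Mᵀ * M * M.adjugate := by rw [(mem_orthogonalGroup_iff' _ _).mp hMo, one_mul]
      _ = Mᵀ := by rw [mul_assoc, mul_adjugate, hdet, one_smul, mul_one]
  rw [crossProduct_mulVec_mulVec, hadj, transpose_transpose]

lemma eq_zero_of_forall_crossProduct_eq_zero {R : Type*} [CommRing R] {q : Fin 3 → R}
    (h : ∀ c, q ⨯₃ c = 0) : q = 0 := by
  have h0 := congrFun (h (Pi.single 0 1))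
  have h1 := congrFun (h (Pi.single 1 1))
  ext i; fin_cases i
  · simpa [cross_apply] using h1 2
  · simpa [cross_apply] using (h0 2).symm
  · simpa [cross_apply] using h0 1

lemma exists_crossProduct_eq (c : Fin 3 → ℝ) : ∃ a b, a ⨯₃ b = c := by
  by_cases hc : c = 0
  · exact ⟨0, 0, by simp [hc]⟩
  obtain ⟨a, ha, hac⟩ : ∃ a : Fin 3 → ℝ, a ⬝ᵥ a ≠ 0 ∧ a ⬝ᵥ c = 0 := by
    by_cases h01 : c 0 = 0 ∧ c 1 = 0
    · exact ⟨![1, 0, 0], by simp, by simp [dotProduct, Fin.sum_univ_three, h01.1]⟩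
    · refine ⟨![-c 1, c 0, 0], ?_, by simp [dotProduct, Fin.sum_univ_three]; ring⟩
      refine ne_of_gt ?_
      simp only [dotProduct, Fin.sum_univ_three]
      rcases not_and_or.mp h01 with h' | h' <;> simp <;>
        nlinarith [mul_self_pos.mpr h', mul_self_nonneg (c 0), mul_self_nonneg (c 1)]
  refine ⟨a, (a ⬝ᵥ a)⁻¹ • (c ⨯₃ a), ?_⟩
  rw [map_smul, cross_cross_eq_smul_sub_smul', dotProduct_comm c, hac, zero_smul, sub_zero,
    smul_smul, inv_mul_cancel₀ ha, one_smul]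

lemma mem_orthogonalGroup_of_dotProduct_mulVec_self {n : Type*} [Fintype n] [DecidableEq n]
    {N : Matrix n n ℝ} (h : ∀ c, N *ᵥ c ⬝ᵥ N *ᵥ c = c ⬝ᵥ c) : N ∈ orthogonalGroup n ℝ := by
  have hpol : ∀ c c', N *ᵥ c ⬝ᵥ N *ᵥ c' = c ⬝ᵥ c' := by
    intro c c'
    have h' := h (c + c')
    simp only [mulVec_add, add_dotProduct, dotProduct_add, h, dotProduct_comm c' c,
      dotProduct_comm (N *ᵥ c') (N *ᵥ c)] at h'
    linarith
  refine (mem_orthogonalGroup_iff' _ _).mpr (ext fun i j => ?_)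
  have hij := hpol (Pi.single i 1) (Pi.single j 1)
  rw [mulVec_single_one, mulVec_single_one, single_dotProduct, one_mul, Pi.single_apply] at hij
  simpa [mul_apply, dotProduct, one_apply, eq_comm] using hij

lemma dotProduct_mulVec_mulVec_of_mem_orthogonalGroup {n : Type*} [Fintype n] [DecidableEq n]
    {R : Matrix n n ℝ} (hR : R ∈ orthogonalGroup n ℝ) (a b : n → ℝ) :
    R *ᵥ a ⬝ᵥ R *ᵥ b = a ⬝ᵥ b := by
  rw [dotProduct_mulVec, ← mulVec_transpose, mulVec_mulVec, (mem_orthogonalGroup_iff' _ _).mp hR,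
    one_mulVec]

theorem exists_sign_smul_mem_specialOrthogonalGroup {S : Matrix (Fin 3) (Fin 3) ℝ}
    (h : ∀ a b, (S *ᵥ a) ⨯₃ (S *ᵥ b) ⬝ᵥ (S *ᵥ a) ⨯₃ (S *ᵥ b) = a ⨯₃ b ⬝ᵥ a ⨯₃ b) :
    ∃ ε : ℝ, (ε = 1 ∨ ε = -1) ∧ ∃ R ∈ specialOrthogonalGroup (Fin 3) ℝ, S = ε • R := by
  set N := S.adjugateᵀ
  have hN : N ∈ orthogonalGroup (Fin 3) ℝ := by
    refine mem_orthogonalGroup_of_dotProduct_mulVec_self fun c => ?_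
    obtain ⟨a, b, rfl⟩ := exists_crossProduct_eq c
    rw [← crossProduct_mulVec_mulVec]
    exact h a b
  have hNtN : Nᵀ * N = 1 := (mem_orthogonalGroup_iff' _ _).mp hN
  have hSN : S = S.det • N := by
    calc S = S * S.adjugate * N := by
          rw [mul_assoc, ← transpose_transpose S.adjugate, hNtN, mul_one]
      _ = S.det • N := by rw [mul_adjugate, smul_one_mul]
  have hdetN : N.det = S.det ^ 2 := by simp [N, det_adjugate]
  have hdetN' : N.det * N.det = 1 := by
    simpa [det_transpose] using congrArg det hNtN
  have hdet_sq : S.det * S.det = 1 := by nlinarith [sq_nonneg S.det]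
  refine ⟨S.det, mul_self_eq_one_iff.mp hdet_sq, N, ?_, hSN⟩
  exact mem_specialOrthogonalGroup_iff.mpr ⟨hN, by rw [hdetN, sq, hdet_sq]⟩

open scoped ComplexOrder in
lemma exists_smul_star_dotProduct_self_eq_one {n : Type*} [Fintype n] {v : n → ℂ} (hv : v ≠ 0) :
    ∃ c : ℂ, star (c • v) ⬝ᵥ (c • v) = 1 := by
  obtain ⟨r, hr, hrv⟩ : ∃ r : ℝ, 0 < r ∧ (r : ℂ) = star v ⬝ᵥ v :=
    RCLike.pos_iff_exists_ofReal.mp (dotProduct_star_self_pos_iff.mpr hv)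
  refine ⟨((Real.sqrt r)⁻¹ : ℝ), ?_⟩
  rw [star_smul, smul_dotProduct, dotProduct_smul, ← hrv]
  simp only [Complex.star_def, Complex.conj_ofReal, smul_eq_mul]
  rw [← mul_assoc, ← Complex.ofReal_mul, ← mul_inv, Real.mul_self_sqrt hr.le]
  exact_mod_cast inv_mul_cancel₀ hr.ne'

lemma exists_mulVec_eq_self_of_mul_self_eq_one {n : Type*} [Fintype n] [DecidableEq n]
    {Z : Matrix n n ℂ} (hZZ : Z * Z = 1) (hZ : Z ≠ -1) :
    ∃ v, Z *ᵥ v = v ∧ star v ⬝ᵥ v = 1 := by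
  -- `Z (1 + Z) = 1 + Z`, so any nonzero column of `1 + Z` is fixed by `Z`.
  have hP : 1 + Z ≠ 0 := fun h => hZ (eq_neg_of_add_eq_zero_right h)
  obtain ⟨j, hj⟩ : ∃ j, (1 + Z) *ᵥ Pi.single j 1 ≠ 0 := by
    by_contra! h
    exact hP (ext fun i j => by simpa [mulVec_single_one] using congrFun (h j) i)
  obtain ⟨c, hc⟩ := exists_smul_star_dotProduct_self_eq_one hj
  refine ⟨c • (1 + Z) *ᵥ Pi.single j 1, ?_, hc⟩
  rw [mulVec_smul, mulVec_mulVec, mul_add, hZZ, mul_one, add_comm]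

lemma star_mulVec_dotProduct_of_isHermitian {n R : Type*} [Fintype n] [NonUnitalSemiring R]
    [StarRing R] {M : Matrix n n R} (hM : M.IsHermitian) (u w : n → R) :
    star (M *ᵥ u) ⬝ᵥ w = star u ⬝ᵥ (M *ᵥ w) := by
  rw [star_mulVec, hM.eq, dotProduct_mulVec]

lemma mulVec_apply_fin_two {R : Type*} [NonUnitalNonAssocSemiring R] (M : Matrix (Fin 2) (Fin 2) R)
    (u : Fin 2 → R) (i : Fin 2) :
    (M *ᵥ u) i = M i 0 * u 0 + M i 1 * u 1 := by
  simp [-mulVec_fin_two, mulVec, dotProduct, Fin.sum_univ_two]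

noncomputable section

namespace Pauli

/-- `pauli a = a₀ σ₁ + a₁ σ₂ + a₂ σ₃` for the Pauli matrices `σ₁, σ₂, σ₃`. -/
def pauli : (Fin 3 → ℝ) →ₗ[ℝ] Matrix (Fin 2) (Fin 2) ℂ where
  toFun a := !![(a 2 : ℂ), a 0 - a 1 * I; a 0 + a 1 * I, -(a 2 : ℂ)]
  map_add' a b := by ext i j; fin_cases i <;> fin_cases j <;> simp <;> ring
  map_smul' r a := by ext i j; fin_cases i <;> fin_cases j <;> simp <;> ring

lemma pauli_apply (a : Fin 3 → ℝ) :
    pauli a = !![(a 2 : ℂ), a 0 - a 1 * I; a 0 + a 1 * I, -(a 2 : ℂ)] := rfl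

lemma isSelfAdjoint_pauli (a : Fin 3 → ℝ) : IsSelfAdjoint (pauli a) := by
  ext i j; fin_cases i <;> fin_cases j <;> simp [pauli_apply, Complex.ext_iff]

lemma pauli_mul_pauli (a b : Fin 3 → ℝ) :
    pauli a * pauli b = ((a ⬝ᵥ b : ℝ) : ℂ) • 1 + I • pauli (a ⨯₃ b) := by
  ext i j; fin_cases i <;> fin_cases j <;>
    simp [pauli_apply, Matrix.mul_apply, vec3_dotProduct, cross_apply] <;> ring_nf <;>
    simp only [I_sq] <;> ring

lemma pauli_mul_self (a : Fin 3 → ℝ) : pauli a * pauli a = ((a ⬝ᵥ a : ℝ) : ℂ) • 1 := by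
  simp [pauli_mul_pauli]

lemma pauli_mul_pauli_add_pauli_mul_pauli (a b : Fin 3 → ℝ) :
    pauli a * pauli b + pauli b * pauli a = ((2 * (a ⬝ᵥ b) : ℝ) : ℂ) • 1 := by
  rw [pauli_mul_pauli, pauli_mul_pauli, ← cross_anticomm, map_neg, dotProduct_comm b]
  push_cast
  module

lemma pauli_mul_pauli_of_dotProduct_eq_zero {a b : Fin 3 → ℝ} (h : a ⬝ᵥ b = 0) :
    pauli a * pauli b = I • pauli (a ⨯₃ b) := by
  simp [pauli_mul_pauli, h]

lemma commutator_pauli (a b : Fin 3 → ℝ) :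
    pauli a * pauli b - pauli b * pauli a = (2 * I) • pauli (a ⨯₃ b) := by
  rw [pauli_mul_pauli, pauli_mul_pauli, ← cross_anticomm, map_neg, dotProduct_comm]
  module

lemma det_pauli (a : Fin 3 → ℝ) : (pauli a).det = -((a ⬝ᵥ a : ℝ) : ℂ) := by
  simp [pauli_apply, det_fin_two_of, vec3_dotProduct, Complex.ext_iff]
  constructor <;> ring

local notation "H₂" => selfAdjoint (Matrix (Fin 2) (Fin 2) ℂ)

def pauliSelfAdjoint : (Fin 3 → ℝ) →ₗ[ℝ] H₂ where
  toFun a := ⟨pauli a, isSelfAdjoint_pauli a⟩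
  map_add' a b := Subtype.ext (map_add pauli a b)
  map_smul' r a := Subtype.ext (map_smul pauli r a)

def pauliCoord : H₂ →ₗ[ℝ] (Fin 3 → ℝ) where
  toFun A := ![(A.1 0 1).re, -(A.1 0 1).im, ((A.1 0 0).re - (A.1 1 1).re) / 2]
  map_add' A B := by ext i; fin_cases i <;> simp <;> ring
  map_smul' r A := by ext i; fin_cases i <;> simp [selfAdjoint.val_smul, ← mul_sub, mul_div_assoc]

def halfTrace : H₂ →ₗ[ℝ] ℝ where
  toFun A := ((A.1 0 0).re + (A.1 1 1).re) / 2
  map_add' A B := by simp; ring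
  map_smul' r A := by simp [selfAdjoint.val_smul]; ring

lemma pauliCoord_pauliSelfAdjoint (a : Fin 3 → ℝ) : pauliCoord (pauliSelfAdjoint a) = a := by
  ext i; fin_cases i <;> simp [pauliCoord, pauliSelfAdjoint, pauli_apply]

lemma pauliCoord_one : pauliCoord 1 = 0 := by
  ext i; fin_cases i <;> simp [pauliCoord]

lemma coe_eq_pauli_add_smul_one (A : H₂) :
    (A : Matrix (Fin 2) (Fin 2) ℂ) = pauli (pauliCoord A) + (halfTrace A : ℂ) • 1 := by
  have hA : (A : Matrix (Fin 2) (Fin 2) ℂ).IsHermitian := A.2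
  have h00 := hA.apply 0 0
  have h11 := hA.apply 1 1
  have h10 := hA.apply 1 0
  ext i j; fin_cases i <;> fin_cases j <;>
    simp [pauliCoord, halfTrace, pauli_apply, Complex.ext_iff] at h00 h11 h10 ⊢ <;>
    constructor <;> linarith

lemma eq_pauliSelfAdjoint_add_smul_one (A : H₂) :
    A = pauliSelfAdjoint (pauliCoord A) + halfTrace A • 1 := by
  ext1
  simp [selfAdjoint.val_smul, coe_eq_pauli_add_smul_one A, pauliSelfAdjoint]

lemma det_commutator (A B : H₂) :
    det ((A : Matrix (Fin 2) (Fin 2) ℂ) * (B : Matrix (Fin 2) (Fin 2) ℂ) -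
        (B : Matrix (Fin 2) (Fin 2) ℂ) * (A : Matrix (Fin 2) (Fin 2) ℂ)) =
      ((4 * (pauliCoord A ⨯₃ pauliCoord B ⬝ᵥ pauliCoord A ⨯₃ pauliCoord B) : ℝ) : ℂ) := by
  have hcomm : ∀ (P Q : Matrix (Fin 2) (Fin 2) ℂ) (s t : ℂ),
      (P + s • 1) * (Q + t • 1) - (Q + t • 1) * (P + s • 1) = P * Q - Q * P := by
    intro P Q s t
    simp only [add_mul, mul_add, smul_mul_assoc, mul_smul_comm, one_mul, mul_one, smul_add]
    module
  rw [coe_eq_pauli_add_smul_one A, coe_eq_pauli_add_smul_one B, hcomm, commutator_pauli,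
    det_smul, det_pauli, Fintype.card_fin, mul_pow, I_sq]
  push_cast
  ring

lemma exists_unitary_mul_pauli_eq {X Z : Matrix (Fin 2) (Fin 2) ℂ} (hX : X.IsHermitian)
    (hZ : Z.IsHermitian) (hXX : X * X = 1) (hZZ : Z * Z = 1) (hXZ : X * Z = -(Z * X)) :
    ∃ U ∈ unitaryGroup (Fin 2) ℂ,
      U * pauli (Pi.single 0 1) = X * U ∧ U * pauli (Pi.single 2 1) = Z * U := by
  have hZ1 : Z ≠ -1 := by
    rintro rfl
    have h : (2 : ℂ) • X = 0 := by
      rw [two_smul, ← neg_eq_iff_add_eq_zero]; simpa using hXZ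
    simp [(smul_eq_zero.mp h).resolve_left two_ne_zero] at hXX
  obtain ⟨v, hZv, hvv⟩ := exists_mulVec_eq_self_of_mul_self_eq_one hZZ hZ1
  set w := X *ᵥ v
  have hXw : X *ᵥ w = v := by rw [mulVec_mulVec, hXX, one_mulVec]
  have hZw : Z *ᵥ w = -w := by
    rw [mulVec_mulVec, ← neg_neg (Z * X), ← hXZ, neg_mulVec, ← mulVec_mulVec, hZv]
  have hww : star w ⬝ᵥ w = 1 := by rw [star_mulVec_dotProduct_of_isHermitian hX, hXw, hvv]
  have hvw : star v ⬝ᵥ w = 0 := by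
    have h : star v ⬝ᵥ w = -(star v ⬝ᵥ w) := by
      calc star v ⬝ᵥ w = star (Z *ᵥ v) ⬝ᵥ w := by rw [hZv]
        _ = -(star v ⬝ᵥ w) := by
          rw [star_mulVec_dotProduct_of_isHermitian hZ, hZw, dotProduct_neg]
    exact self_eq_neg.mp h
  have hwv : star w ⬝ᵥ v = 0 := by rw [star_mulVec_dotProduct_of_isHermitian hX, hvw]
  -- `v, w` is an orthonormal eigenbasis of `Z` whose vectors `X` swaps; take them as columns.
  refine ⟨of fun i j => ![v, w] j i, ?_, ?_, ?_⟩
  · rw [mem_unitaryGroup_iff']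
    ext i j
    fin_cases i <;> fin_cases j <;> simp [mul_apply, dotProduct] at hvv hww hvw hwv ⊢ <;>
      assumption
  · ext i j
    fin_cases j <;> simp [mul_apply, pauli_apply, Fin.sum_univ_two] <;>
      rw [← mulVec_apply_fin_two]
    rw [hXw]
  · ext i j
    fin_cases j <;> simp [mul_apply, pauli_apply, Fin.sum_univ_two] <;>
      rw [← mulVec_apply_fin_two] <;> simp [hZv, hZw]

theorem exists_unitary_conj_pauli {R : Matrix (Fin 3) (Fin 3) ℝ}
    (hR : R ∈ specialOrthogonalGroup (Fin 3) ℝ) :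
    ∃ U ∈ unitaryGroup (Fin 2) ℂ, ∀ a, U * pauli a * star U = pauli (R *ᵥ a) := by
  have hdot :=
    dotProduct_mulVec_mulVec_of_mem_orthogonalGroup (mem_specialOrthogonalGroup_iff.mp hR).1
  have hcross := crossProduct_mulVec_mulVec_of_mem_specialOrthogonalGroup hR
  let e (i : Fin 3) : Fin 3 → ℝ := Pi.single i 1
  have he20 : e 2 ⨯₃ e 0 = e 1 := by ext i; fin_cases i <;> simp [e, cross_apply]
  have he20' : e 2 ⬝ᵥ e 0 = 0 := by simp [e]
  obtain ⟨U, hU, h0, h2⟩ := exists_unitary_mul_pauli_eq (X := pauli (R *ᵥ e 0))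
    (Z := pauli (R *ᵥ e 2)) (isSelfAdjoint_pauli _) (isSelfAdjoint_pauli _)
    (by rw [pauli_mul_self, hdot]; simp [e]) (by rw [pauli_mul_self, hdot]; simp [e])
    (eq_neg_of_add_eq_zero_left (by rw [pauli_mul_pauli_add_pauli_mul_pauli, hdot]; simp [e]))
  -- `σ₃ σ₁ = i σ₂`, and likewise for the rotated frame.
  have h1 : U * pauli (e 1) = pauli (R *ᵥ e 1) * U := by
    refine smul_right_injective _ I_ne_zero ?_
    simp only
    rw [← mul_smul_comm, ← smul_mul_assoc, ← he20, ← pauli_mul_pauli_of_dotProduct_eq_zero he20',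
      ← hcross, ← pauli_mul_pauli_of_dotProduct_eq_zero (by rwa [hdot]), ← mul_assoc, h2,
      mul_assoc, h0, mul_assoc]
  have hconj : ∀ a, U * pauli a = pauli (R *ᵥ a) * U := by
    have hlin : (LinearMap.mulLeft ℝ U) ∘ₗ pauli =
        (LinearMap.mulRight ℝ U) ∘ₗ pauli ∘ₗ R.mulVecLin := by
      refine (Pi.basisFun ℝ (Fin 3)).ext fun i => ?_
      simp only [LinearMap.comp_apply, LinearMap.mulLeft_apply, LinearMap.mulRight_apply,
        mulVecLin_apply, Pi.basisFun_apply]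
      fin_cases i
      exacts [h0, h1, h2]
    exact fun a => LinearMap.congr_fun hlin a
  refine ⟨U, hU, fun a => ?_⟩
  rw [hconj, mul_assoc, mem_unitaryGroup_iff.mp hU, mul_one]

theorem exists_sign_rotation_pauliCoord_map {φ : H₂ →ₗ[ℝ] H₂}
    (hφ : ∀ A B, pauliCoord (φ A) ⨯₃ pauliCoord (φ B) ⬝ᵥ pauliCoord (φ A) ⨯₃ pauliCoord (φ B) =
      pauliCoord A ⨯₃ pauliCoord B ⬝ᵥ pauliCoord A ⨯₃ pauliCoord B) :
    ∃ ε : ℝ, (ε = 1 ∨ ε = -1) ∧ ∃ R ∈ specialOrthogonalGroup (Fin 3) ℝ,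
      ∀ A, pauliCoord (φ A) = ε • R *ᵥ pauliCoord A := by
  set S := LinearMap.toMatrix' (pauliCoord ∘ₗ φ ∘ₗ pauliSelfAdjoint)
  have hS : ∀ a, S *ᵥ a = pauliCoord (φ (pauliSelfAdjoint a)) := LinearMap.toMatrix'_mulVec _
  obtain ⟨ε, hε, R, hR, hSR⟩ := exists_sign_smul_mem_specialOrthogonalGroup (S := S)
    fun a b => by
      simpa only [hS, pauliCoord_pauliSelfAdjoint] using hφ (pauliSelfAdjoint a) (pauliSelfAdjoint b)
  have hεε : ε * ε = 1 := by rcases hε with rfl | rfl <;> norm_num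
  have hsurj : ∀ c, ∃ b, S *ᵥ b = c := fun c => ⟨ε • Rᵀ *ᵥ c, by
    rw [hSR, mulVec_smul, smul_mulVec, mulVec_mulVec,
      (mem_orthogonalGroup_iff _ _).mp (mem_specialOrthogonalGroup_iff.mp hR).1, one_mulVec,
      smul_smul, hεε, one_smul]⟩
  have hφ1 : pauliCoord (φ 1) = 0 := eq_zero_of_forall_crossProduct_eq_zero fun c => by
    obtain ⟨b, rfl⟩ := hsurj c
    refine dotProduct_self_eq_zero.mp ?_
    simpa [hS, pauliCoord_one] using hφ 1 (pauliSelfAdjoint b)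
  refine ⟨ε, hε, R, hR, fun A => ?_⟩
  calc pauliCoord (φ A) = pauliCoord (φ (pauliSelfAdjoint (pauliCoord A) + halfTrace A • 1)) := by
        rw [← eq_pauliSelfAdjoint_add_smul_one]
    _ = S *ᵥ pauliCoord A := by
        rw [map_add, map_smul, map_add, map_smul, hφ1, smul_zero, add_zero, hS]
    _ = ε • R *ᵥ pauliCoord A := by rw [hSR, smul_mulVec]

end Pauli

end

open Pauli

/-- A real-linear map on 2×2 Hermitian matrices preserving the determinant of commutators
is of the form `A ↦ ε·UAU* + f(A)·I` with `U` unitary or antiunitary (the antiunitary case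
corresponds to conjugating the entrywise complex conjugate by a unitary). -/
theorem stmt5
    (φ : selfAdjoint (Matrix (Fin 2) (Fin 2) ℂ) →ₗ[ℝ] selfAdjoint (Matrix (Fin 2) (Fin 2) ℂ))
    (hφ : ∀ A B : selfAdjoint (Matrix (Fin 2) (Fin 2) ℂ),
      Matrix.det ((φ A : Matrix (Fin 2) (Fin 2) ℂ) * (φ B : Matrix (Fin 2) (Fin 2) ℂ) -
          (φ B : Matrix (Fin 2) (Fin 2) ℂ) * (φ A : Matrix (Fin 2) (Fin 2) ℂ)) =
        Matrix.det ((A : Matrix (Fin 2) (Fin 2) ℂ) * (B : Matrix (Fin 2) (Fin 2) ℂ) -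
          (B : Matrix (Fin 2) (Fin 2) ℂ) * (A : Matrix (Fin 2) (Fin 2) ℂ))) :
    ∃ ε : ℝ, (ε = 1 ∨ ε = -1) ∧ ∃ f : selfAdjoint (Matrix (Fin 2) (Fin 2) ℂ) →ₗ[ℝ] ℝ,
      ∃ U : Matrix.unitaryGroup (Fin 2) ℂ,
        (∀ A : selfAdjoint (Matrix (Fin 2) (Fin 2) ℂ),
          (φ A : Matrix (Fin 2) (Fin 2) ℂ) =
            (ε : ℂ) • ((U : Matrix (Fin 2) (Fin 2) ℂ) * (A : Matrix (Fin 2) (Fin 2) ℂ) *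
              star (U : Matrix (Fin 2) (Fin 2) ℂ)) + (f A : ℂ) • (1 : Matrix (Fin 2) (Fin 2) ℂ)) ∨
        (∀ A : selfAdjoint (Matrix (Fin 2) (Fin 2) ℂ),
          (φ A : Matrix (Fin 2) (Fin 2) ℂ) =
            (ε : ℂ) • ((U : Matrix (Fin 2) (Fin 2) ℂ) *
                ((A : Matrix (Fin 2) (Fin 2) ℂ).map (starRingEnd ℂ)) *
              star (U : Matrix (Fin 2) (Fin 2) ℂ)) + (f A : ℂ) • (1 : Matrix (Fin 2) (Fin 2) ℂ)) := by
  obtain ⟨ε, hε, R, hR, hφR⟩ := exists_sign_rotation_pauliCoord_map fun A B => by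
    simpa [det_commutator] using hφ A B
  obtain ⟨U, hU, hUR⟩ := exists_unitary_conj_pauli hR
  refine ⟨ε, hε, halfTrace ∘ₗ φ - ε • halfTrace, ⟨U, hU⟩, Or.inl fun A => ?_⟩
  have hA : pauli (pauliCoord A) = A - (halfTrace A : ℂ) • 1 := by
    rw [coe_eq_pauli_add_smul_one A, add_sub_cancel_right]
  rw [coe_eq_pauli_add_smul_one (φ A), hφR, map_smul, ← hUR, hA, mul_sub, sub_mul, mul_smul_comm,
    smul_mul_assoc, mul_one, mem_unitaryGroup_iff.mp hU]
  simp only [LinearMap.sub_apply, LinearMap.comp_apply, LinearMap.smul_apply, smul_eq_mul]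
  push_cast
  module
end

section
/- If A is a positive trace-one operator (density operator) on a complex Hilbert space and x is a unit vector, then ⟨A²x,x⟩ − ⟨Ax,x⟩² ≥ 0, and the operator norm of the commutator [A, x⊗x] equals √(⟨A²x,x⟩ − ⟨Ax,x⟩²). -/
/-!
Write `Ax = ⟨x, Ax⟩ x + v` with `v ⊥ x`. For symmetric `A` the number `⟨x, Ax⟩` is real, so
`⟨A²x, x⟩ − ⟨Ax, x⟩² = ‖Ax‖² − ⟨Ax, x⟩² = ‖v‖²` by Pythagoras, and the commutator `[A, x⊗x]` is
`y ↦ ⟨x, y⟩ v − ⟨v, y⟩ x`. This operator sends `x` to `v`, and splitting `y = ⟨x, y⟩ x + w` with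
`w ⊥ x` gives `‖⟨x, y⟩ v − ⟨v, w⟩ x‖² = |⟨x, y⟩|² ‖v‖² + |⟨v, w⟩|² ≤ ‖v‖² ‖y‖²` by Cauchy–Schwarz,
so its norm is exactly `‖v‖`.
-/

open ContinuousLinearMap RCLike
open scoped InnerProductSpace

section

variable {𝕜 E : Type*} [RCLike 𝕜] [NormedAddCommGroup E] [InnerProductSpace 𝕜 E]

section UnitVector

variable {x : E} (hx : ‖x‖ = 1)
include hx

lemma inner_sub_inner_smul_self_eq_zero (y : E) : ⟪x, y - ⟪x, y⟫_𝕜 • x⟫_𝕜 = 0 := by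
  rw [inner_sub_right, inner_smul_right, inner_self_eq_norm_sq_to_K, hx]
  simp

lemma norm_sub_inner_smul_self_sq (y : E) :
    ‖y - ⟪x, y⟫_𝕜 • x‖ ^ 2 = ‖y‖ ^ 2 - ‖⟪x, y⟫_𝕜‖ ^ 2 := by
  have h := norm_add_sq_eq_norm_sq_add_norm_sq_of_inner_eq_zero (⟪x, y⟫_𝕜 • x) (y - ⟪x, y⟫_𝕜 • x)
    (by rw [inner_smul_left, inner_sub_inner_smul_self_eq_zero hx, mul_zero])
  rw [add_sub_cancel, norm_smul, hx, mul_one] at h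
  rw [← sq, ← sq, ← sq] at h
  linarith

lemma norm_smul_sub_smul_sq_of_inner_eq_zero {v : E} (hxv : ⟪x, v⟫_𝕜 = 0) (a b : 𝕜) :
    ‖a • v - b • x‖ ^ 2 = ‖a‖ ^ 2 * ‖v‖ ^ 2 + ‖b‖ ^ 2 := by
  have h := norm_sub_sq (𝕜 := 𝕜) (a • v) (b • x)
  rw [inner_smul_left, inner_smul_right, ← inner_conj_symm, hxv] at h
  rw [h, norm_smul, norm_smul, hx]
  simp only [map_zero, mul_zero]
  ring

lemma norm_inner_smulRight_sub_smulRight_of_inner_eq_zero {v : E} (hxv : ⟪x, v⟫_𝕜 = 0) :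
    ‖(innerSL 𝕜 x).smulRight v - (innerSL 𝕜 v).smulRight x‖ = ‖v‖ := by
  have hvx : ⟪v, x⟫_𝕜 = 0 := by rw [← inner_conj_symm, hxv, map_zero]
  have happly (y : E) :
      ((innerSL 𝕜 x).smulRight v - (innerSL 𝕜 v).smulRight x) y = ⟪x, y⟫_𝕜 • v - ⟪v, y⟫_𝕜 • x :=
    rfl
  refine le_antisymm (opNorm_le_bound _ (norm_nonneg v) fun y => ?_) ?_
  · set w := y - ⟪x, y⟫_𝕜 • x
    have hvw : ⟪v, y⟫_𝕜 = ⟪v, w⟫_𝕜 := by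
      rw [inner_sub_right, inner_smul_right, hvx, mul_zero, sub_zero]
    have hw := norm_sub_inner_smul_self_sq (𝕜 := 𝕜) hx y
    have hbound : ‖⟪v, w⟫_𝕜‖ ≤ ‖v‖ * ‖w‖ := norm_inner_le_norm v w
    rw [happly, ← pow_le_pow_iff_left₀ (norm_nonneg _) (by positivity) two_ne_zero,
      norm_smul_sub_smul_sq_of_inner_eq_zero hx hxv, hvw, mul_pow]
    nlinarith [pow_le_pow_left₀ (norm_nonneg _) hbound 2, sq_nonneg ‖v‖]
  · calc ‖v‖ = ‖((innerSL 𝕜 x).smulRight v - (innerSL 𝕜 v).smulRight x) x‖ := by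
          rw [happly, hvx, inner_self_eq_norm_sq_to_K, hx]; simp
      _ ≤ _ * ‖x‖ := le_opNorm _ x
      _ = _ := by rw [hx, mul_one]

end UnitVector

section Symmetric

variable {A : E →L[𝕜] E} (hA : (A : E →ₗ[𝕜] E).IsSymmetric)
include hA

lemma commutator_smulRight_inner_self_eq (x : E) :
    A * (innerSL 𝕜 x).smulRight x - (innerSL 𝕜 x).smulRight x * A =
      (innerSL 𝕜 x).smulRight (A x - ⟪x, A x⟫_𝕜 • x) -
        (innerSL 𝕜 (A x - ⟪x, A x⟫_𝕜 • x)).smulRight x := by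
  have hreal : (re ⟪x, A x⟫_𝕜 : 𝕜) = ⟪x, A x⟫_𝕜 := hA.coe_re_inner_self_apply x
  ext y
  have hAy : ⟪x, A y⟫_𝕜 = ⟪A x, y⟫_𝕜 := (hA x y).symm
  rw [← hreal]
  simp only [sub_apply, mul_apply_eq_comp, smulRight_apply, innerSL_apply_apply, map_smul,
    inner_sub_left, inner_smul_left, conj_ofReal, hAy]
  module

lemma re_inner_apply_apply_sub_sq_eq_norm_sq {x : E} (hx : ‖x‖ = 1) :
    re ⟪x, A (A x)⟫_𝕜 - (re ⟪x, A x⟫_𝕜) ^ 2 = ‖A x - ⟪x, A x⟫_𝕜 • x‖ ^ 2 := by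
  have hreal : (re ⟪x, A x⟫_𝕜 : 𝕜) = ⟪x, A x⟫_𝕜 := hA.coe_re_inner_self_apply x
  have hAA : ⟪A x, A x⟫_𝕜 = ⟪x, A (A x)⟫_𝕜 := hA x (A x)
  rw [norm_sub_inner_smul_self_sq hx, ← inner_self_eq_norm_sq (𝕜 := 𝕜), hAA, ← hreal,
    norm_ofReal, sq_abs, ofReal_re]

end Symmetric

end

theorem stmt6_general {H : Type*} [NormedAddCommGroup H] [InnerProductSpace ℂ H]
    (A : H →L[ℂ] H) (hA : A.IsPositive)
    (x : H) (hx : ‖x‖ = 1) :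
    0 ≤ (inner ℂ x (A (A x)) : ℂ).re - ((inner ℂ x (A x) : ℂ).re) ^ 2 ∧
    ‖A * ((innerSL ℂ x).smulRight x) - ((innerSL ℂ x).smulRight x) * A‖ =
      Real.sqrt ((inner ℂ x (A (A x)) : ℂ).re - ((inner ℂ x (A x) : ℂ).re) ^ 2) := by
  have hvar := re_inner_apply_apply_sub_sq_eq_norm_sq hA.isSymmetric hx
  simp only [RCLike.re_to_complex] at hvar
  rw [hvar, Real.sqrt_sq (norm_nonneg _), commutator_smulRight_inner_self_eq hA.isSymmetric,
    norm_inner_smulRight_sub_smulRight_of_inner_eq_zero hx (inner_sub_inner_smul_self_eq_zero hx _)]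
  exact ⟨sq_nonneg _, rfl⟩

/-- For a density operator `A` and a unit vector `x`, we have
`⟨A²x,x⟩ − ⟨Ax,x⟩² ≥ 0` and `‖[A, x⊗x]‖ = √(⟨A²x,x⟩ − ⟨Ax,x⟩²)`. -/
theorem stmt6 {H : Type*} [NormedAddCommGroup H] [InnerProductSpace ℂ H]
    [FiniteDimensional ℂ H] (A : H →L[ℂ] H) (hA : A.IsPositive)
    (htr : LinearMap.trace ℂ H A.toLinearMap = 1)
    (x : H) (hx : ‖x‖ = 1) :
    0 ≤ (inner ℂ x (A (A x)) : ℂ).re - ((inner ℂ x (A x) : ℂ).re) ^ 2 ∧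
    ‖A * ((innerSL ℂ x).smulRight x) - ((innerSL ℂ x).smulRight x) * A‖ =
      Real.sqrt ((inner ℂ x (A (A x)) : ℂ).re - ((inner ℂ x (A x) : ℂ).re) ^ 2) :=
  stmt6_general A hA x hx
end

section
/- For rank-one self-adjoint projections P and Q on a complex Hilbert space, the operator norm of their commutator satisfies ‖[P,Q]‖ = √(tr(PQ) − (tr(PQ))²). -/
/-!
A rank-one idempotent compresses every operator to a scalar, `P S P = tr (P S) • P`; with
`τ = tr (P Q)` this gives `P Q P = τ • P` and `Q P Q = τ • Q`. Hence `X = [P, Q]⋆ [P, Q]`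
equals `τ • (P - Q) ^ 2`, and `X * X = τ (1 - τ) • X`, `X * P = τ (1 - τ) • P`, so the
C⋆-identity `‖X‖ ^ 2 = ‖X * X‖` forces `‖[P, Q]‖ ^ 2 = ‖X‖ = |τ (1 - τ)|`. Finally
`0 ≤ τ ≤ 1`, as `τ = tr (P Q P)` and `1 - τ = tr (P (1 - Q) P)` are traces of positive
operators.
-/

open LinearMap

theorem LinearMap.exists_mul_mul_eq_smul_of_finrank_range_eq_one {K V : Type*} [Field K]
    [AddCommGroup V] [Module K V] {f : Module.End K V} (hf : Module.finrank K (range f) = 1)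
    (g : Module.End K V) : ∃ c : K, f * g * f = c • f := by
  have hmaps : ∀ x ∈ range f, (f * g) x ∈ range f := fun x _ ↦ mem_range_self f (g x)
  obtain ⟨c, hc, -⟩ := existsUnique_eq_smul_id_of_finrank_eq_one hf ((f * g).restrict hmaps)
  refine ⟨c, LinearMap.ext fun x ↦ ?_⟩
  simpa using congr_arg Subtype.val (LinearMap.congr_fun hc ⟨f x, mem_range_self f x⟩)

theorem IsIdempotentElem.mul_mul_self_eq_trace_smul {K V : Type*} [Field K]
    [AddCommGroup V] [Module K V] [FiniteDimensional K V] {f : Module.End K V}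
    (hf : IsIdempotentElem f) (hr : Module.finrank K (range f) = 1) (g : Module.End K V) :
    f * g * f = trace K V (f * g) • f := by
  obtain ⟨c, hc⟩ := exists_mul_mul_eq_smul_of_finrank_range_eq_one hr g
  have htrace : trace K V (f * g) = c := by
    calc trace K V (f * g) = trace K V (f * g * f) := by
          rw [trace_mul_cycle, hf.eq]
      _ = c := by rw [hc, map_smul, hf.isProj_range.trace, hr, Nat.cast_one, smul_eq_mul, mul_one]
  rw [hc, htrace]

section CStarRing

variable {𝕜 A : Type*} [NormedField 𝕜] [NormedRing A] [StarRing A] [CStarRing A]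
  [NormedAlgebra 𝕜 A]

theorem IsSelfAdjoint.norm_eq_of_mul_self_eq_smul {x p : A} {c : 𝕜} (hx : IsSelfAdjoint x)
    (hxx : x * x = c • x) (hxp : x * p = c • p) (hp : p ≠ 0) : ‖x‖ = ‖c‖ := by
  rcases eq_or_ne x 0 with rfl | hx0
  · have hc : c = 0 := by simpa [hp, eq_comm] using hxp
    simp [hc]
  · have h : ‖x‖ * ‖x‖ = ‖c‖ * ‖x‖ := by
      rw [← sq, ← hx.norm_mul_self, hxx, norm_smul]
    exact mul_right_cancel₀ (norm_ne_zero_iff.2 hx0) h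

theorem IsStarProjection.norm_commutator_sq {p q : A} {c : 𝕜} (hp : IsStarProjection p)
    (hq : IsStarProjection q) (hpqp : p * q * p = c • p) (hqpq : q * p * q = c • q)
    (hp0 : p ≠ 0) : ‖p * q - q * p‖ ^ 2 = ‖c * (1 - c)‖ := by
  have hpp : p * p = p := hp.isIdempotentElem
  have hqq : q * q = q := hq.isIdempotentElem
  have hpp' (x : A) : p * (p * x) = p * x := by rw [← mul_assoc, hpp]
  have hqq' (x : A) : q * (q * x) = q * x := by rw [← mul_assoc, hqq]
  rw [mul_assoc] at hpqp hqpq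
  -- `a = (p - q) ^ 2`
  set a := p + q - p * q - q * p
  have hstar : star (p * q - q * p) * (p * q - q * p) = c • a := by
    simp only [star_sub, star_mul, hp.isSelfAdjoint.star_eq, hq.isSelfAdjoint.star_eq, a,
      mul_sub, sub_mul, mul_assoc, hpp', hqq', hpqp, hqpq, mul_smul_comm]
    module
  have haa : a * a = (1 - c) • a := by
    simp only [a, mul_sub, sub_mul, mul_add, add_mul, mul_assoc, hpp, hqq, hpp', hqq', hpqp, hqpq,
      mul_smul_comm]
    module
  have hap : a * p = (1 - c) • p := by
    simp only [a, sub_mul, add_mul, mul_assoc, hpp, hpqp]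
    module
  rw [sq, ← CStarRing.norm_star_mul_self]
  refine (IsSelfAdjoint.star_mul_self _).norm_eq_of_mul_self_eq_smul ?_ ?_ hp0
  · rw [hstar, smul_mul_smul_comm, haa]
    module
  · rw [hstar, smul_mul_assoc, hap]
    module

end CStarRing

theorem ContinuousLinearMap.mul_mul_self_eq_trace_smul {𝕜 E : Type*}
    [NontriviallyNormedField 𝕜] [NormedAddCommGroup E] [NormedSpace 𝕜 E] [FiniteDimensional 𝕜 E]
    {P : E →L[𝕜] E} (hP : IsIdempotentElem P) (hr : Module.finrank 𝕜 (range P.toLinearMap) = 1)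
    (S : E →L[𝕜] E) : P * S * P = trace 𝕜 E (P * S).toLinearMap • P :=
  coe_injective <| by
    simpa using (IsIdempotentElem.toLinearMap hP).mul_mul_self_eq_trace_smul hr S.toLinearMap

open scoped ComplexOrder

section InnerProductSpace

variable {𝕜 E : Type*} [RCLike 𝕜] [NormedAddCommGroup E] [InnerProductSpace 𝕜 E]
  [CompleteSpace E] {P Q : E →L[𝕜] E}

theorem IsStarProjection.trace_mul_nonneg (hP : IsStarProjection P) (hQ : Q.IsPositive) :
    0 ≤ trace 𝕜 E (P * Q).toLinearMap := by
  have h : trace 𝕜 E (P * Q * P).toLinearMap = trace 𝕜 E (P * Q).toLinearMap := by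
    rw [ContinuousLinearMap.toLinearMap_mul (P * Q), trace_mul_comm,
      ← ContinuousLinearMap.toLinearMap_mul, ← mul_assoc, hP.isIdempotentElem.eq]
  have hPQP : (P * Q * P).IsPositive := by
    have := hQ.conj_adjoint P
    rwa [hP.isSelfAdjoint.adjoint_eq] at this
  exact h ▸ ((ContinuousLinearMap.isPositive_toLinearMap_iff _).2 hPQP).trace_nonneg

theorem IsStarProjection.trace_mul_mem_Icc [FiniteDimensional 𝕜 E] (hP : IsStarProjection P)
    (hr : Module.finrank 𝕜 (range P.toLinearMap) = 1) (hQ : IsStarProjection Q) :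
    trace 𝕜 E (P * Q).toLinearMap ∈ Set.Icc 0 1 := by
  refine ⟨hP.trace_mul_nonneg (.of_isStarProjection hQ), ?_⟩
  have h := hP.trace_mul_nonneg (.of_isStarProjection hQ.one_sub)
  have htrace : trace 𝕜 E P.toLinearMap = 1 := by
    rw [(ContinuousLinearMap.IsIdempotentElem.toLinearMap hP.isIdempotentElem).isProj_range.trace,
      hr, Nat.cast_one]
  rwa [mul_sub, mul_one, ContinuousLinearMap.toLinearMap_sub, map_sub, htrace, sub_nonneg] at h

end InnerProductSpace

/-- For rank-one orthogonal projections `P`, `Q`, the operator norm of the commutator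
satisfies `‖[P,Q]‖ = √(tr(PQ) − (tr(PQ))²)`. -/
theorem stmt8 {H : Type*} [NormedAddCommGroup H] [InnerProductSpace ℂ H]
    [FiniteDimensional ℂ H] (P Q : H →L[ℂ] H)
    (hP : IsSelfAdjoint P) (hP2 : P * P = P)
    (hPr : Module.finrank ℂ (LinearMap.range P.toLinearMap) = 1)
    (hQ : IsSelfAdjoint Q) (hQ2 : Q * Q = Q)
    (hQr : Module.finrank ℂ (LinearMap.range Q.toLinearMap) = 1) :
    ‖P * Q - Q * P‖ =
      Real.sqrt ((LinearMap.trace ℂ H (P * Q).toLinearMap).re -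
        ((LinearMap.trace ℂ H (P * Q).toLinearMap).re) ^ 2) := by
  have hPp : IsStarProjection P := ⟨hP2, hP⟩
  have hQp : IsStarProjection Q := ⟨hQ2, hQ⟩
  have hP0 : P ≠ 0 := by
    rintro rfl
    rw [ContinuousLinearMap.toLinearMap_zero, LinearMap.range_zero, finrank_bot] at hPr
    exact zero_ne_one hPr
  obtain ⟨hτ0, hτ1⟩ := hPp.trace_mul_mem_Icc hPr hQp
  have hPQP := ContinuousLinearMap.mul_mul_self_eq_trace_smul hP2 hPr Q
  have hQPQ := ContinuousLinearMap.mul_mul_self_eq_trace_smul hQ2 hQr P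
  rw [ContinuousLinearMap.toLinearMap_mul, LinearMap.trace_mul_comm,
    ← ContinuousLinearMap.toLinearMap_mul] at hQPQ
  generalize LinearMap.trace ℂ H (P * Q).toLinearMap = τ at *
  obtain ⟨t, rfl⟩ : ∃ t : ℝ, (t : ℂ) = τ :=
    ⟨τ.re, Complex.ext rfl (Complex.nonneg_iff.1 hτ0).2⟩
  rw [Complex.zero_le_real] at hτ0
  rw [← Complex.ofReal_one, Complex.real_le_real] at hτ1
  have hnorm := hPp.norm_commutator_sq hQp hPQP hQPQ hP0
  rw [← Complex.ofReal_one, ← Complex.ofReal_sub, ← Complex.ofReal_mul, Complex.norm_real,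
    Real.norm_of_nonneg (by nlinarith)] at hnorm
  rw [Complex.ofReal_re, ← Real.sqrt_sq (norm_nonneg (P * Q - Q * P)), hnorm]
  ring_nf
end

section
/- If V is a unitary operator on a complex Hilbert space and x is a unit vector, then the operator norm of [V, x⊗x] equals √(1 − |⟨Vx,x⟩|²). -/
/-!
Multiplying on the right by the unitary `star V` does not change the norm and turns the commutator
into `T = P_y - P_x`, where `y = V x` and `P_u` is the projection onto `span {u}`. With
`s = |⟪x, y⟫|²` one has `P_x P_y P_x = s P_x` and `P_y P_x P_y = s P_y`, hence `T³ = (1 - s) T`.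
Since `T` is self-adjoint, the C⋆-identity gives `‖T‖⁴ = ‖T⁴‖ = (1 - s) ‖T‖²`, so
`‖T‖² ≤ 1 - s`; the bound is attained at `x`, since `‖T x‖² = 1 - s`.
-/

open InnerProductSpace ContinuousLinearMap

theorem IsSelfAdjoint.norm_sq_le_of_pow_three_eq_smul {𝕜 A : Type*} [NormedField 𝕜]
    [NormedRing A] [StarRing A] [CStarRing A] [NormedSpace 𝕜 A] [IsScalarTower 𝕜 A A]
    {a : A} (ha : IsSelfAdjoint a) {c : 𝕜} (h : a ^ 3 = c • a) : ‖a‖ ^ 2 ≤ ‖c‖ := by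
  have h4 : a ^ 4 = c • a ^ 2 := by rw [pow_succ, h, smul_mul_assoc, ← pow_two]
  have hnorm : ‖a‖ ^ 2 * ‖a‖ ^ 2 = ‖c‖ * ‖a‖ ^ 2 := by
    have := congrArg norm h4
    rw [norm_smul, show 4 = 2 ^ 2 by rfl, ha.norm_pow_two_pow 2, show 2 = 2 ^ 1 by rfl,
      ha.norm_pow_two_pow 1] at this
    linear_combination this
  rcases eq_or_ne (‖a‖ ^ 2) 0 with h0 | h0
  · rw [h0]
    positivity
  · exact (mul_right_cancel₀ h0 hnorm).le

theorem sub_pow_three_of_isIdempotentElem {S R : Type*} [CommRing S] [Ring R] [Algebra S R]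
    {p q : R} (hp : IsIdempotentElem p) (hq : IsIdempotentElem q) {s : S}
    (hpqp : p * q * p = s • p) (hqpq : q * p * q = s • q) :
    (q - p) ^ 3 = (1 - s) • (q - p) := by
  have expand : (q - p) ^ 3 = q * q * q - q * q * p - q * p * q + q * (p * p) - p * (q * q)
      + p * q * p + p * p * q - p * p * p := by noncomm_ring
  simp only [expand, hp.eq, hq.eq, hpqp, hqpq]
  module

theorem CStarRing.norm_commutator_eq_norm_conj_sub {A : Type*} [NormedRing A] [StarRing A]
    [CStarRing A] {U : A} (hU : U ∈ unitary A) (a : A) :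
    ‖U * a - a * U‖ = ‖U * a * star U - a‖ := by
  rw [← CStarRing.norm_mul_mem_unitary _ (Unitary.star_mem hU), sub_mul, mul_assoc a,
    Unitary.mul_star_self_of_mem hU, mul_one]

section RankOne

variable {𝕜 E : Type*} [RCLike 𝕜] [NormedAddCommGroup E] [InnerProductSpace 𝕜 E]

theorem rankOne_self_mul_rankOne_self_mul_rankOne_self (x y : E) :
    rankOne 𝕜 x x * rankOne 𝕜 y y * rankOne 𝕜 x x =
      ((‖inner 𝕜 x y‖ ^ 2 : ℝ) : 𝕜) • rankOne 𝕜 x x := by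
  simp only [mul_def, rankOne_comp_rankOne, smul_comp, smul_smul, ← inner_conj_symm x y,
    RCLike.conj_mul, RCLike.norm_conj]
  norm_cast

theorem norm_rankOne_self_sub_rankOne_self_apply_sq {x y : E} (hx : ‖x‖ = 1) (hy : ‖y‖ = 1) :
    ‖(rankOne 𝕜 y y - rankOne 𝕜 x x) x‖ ^ 2 = 1 - ‖inner 𝕜 x y‖ ^ 2 := by
  have hxx : inner 𝕜 x x = 1 := by
    rw [inner_self_eq_norm_sq_to_K, hx]
    simp
  rw [sub_apply, rankOne_apply, rankOne_apply, hxx, one_smul, norm_sub_sq (𝕜 := 𝕜),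
    inner_smul_left, inner_conj_symm, ← inner_conj_symm x y, RCLike.conj_mul, norm_smul, hx, hy,
    RCLike.norm_conj]
  norm_cast
  ring

variable [CompleteSpace E]

theorem mul_rankOne_mul_star (f g : E →L[𝕜] E) (x y : E) :
    f * rankOne 𝕜 x y * star g = rankOne 𝕜 (f x) (g y) := by
  rw [mul_def, mul_def, comp_rankOne, star_eq_adjoint, rankOne_comp, adjoint_adjoint]

theorem norm_rankOne_self_sub_rankOne_self {x y : E} (hx : ‖x‖ = 1) (hy : ‖y‖ = 1) :
    ‖rankOne 𝕜 y y - rankOne 𝕜 x x‖ = √(1 - ‖inner 𝕜 x y‖ ^ 2) := by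
  set T := rankOne 𝕜 y y - rankOne 𝕜 x x
  set r := 1 - ‖inner 𝕜 x y‖ ^ 2
  have hT : IsSelfAdjoint T :=
    (isStarProjection_rankOne_self hy).isSelfAdjoint.sub
      (isStarProjection_rankOne_self hx).isSelfAdjoint
  have hcube : T ^ 3 = (r : 𝕜) • T := by
    rw [RCLike.ofReal_sub, RCLike.ofReal_one]
    refine sub_pow_three_of_isIdempotentElem (isIdempotentElem_rankOne_self hx)
      (isIdempotentElem_rankOne_self hy) (rankOne_self_mul_rankOne_self_mul_rankOne_self x y) ?_
    rw [rankOne_self_mul_rankOne_self_mul_rankOne_self y x, norm_inner_symm]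
  have hTx : ‖T x‖ ^ 2 = r := norm_rankOne_self_sub_rankOne_self_apply_sq hx hy
  have hr : 0 ≤ r := hTx ▸ sq_nonneg _
  have hsq : ‖T‖ ^ 2 = r := by
    refine le_antisymm ?_ ?_
    · simpa [RCLike.norm_of_nonneg hr] using hT.norm_sq_le_of_pow_three_eq_smul hcube
    · rw [← hTx]
      gcongr
      simpa [hx] using T.le_opNorm x
  rw [← hsq, Real.sqrt_sq (norm_nonneg T)]

end RankOne

/-- For a unitary `V` and a unit vector `x`, `‖[V, x⊗x]‖ = √(1 − |⟨Vx,x⟩|²)`. -/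
theorem stmt15 {H : Type*} [NormedAddCommGroup H] [InnerProductSpace ℂ H]
    [CompleteSpace H] (V : H →L[ℂ] H) (hV : V ∈ unitary (H →L[ℂ] H))
    (x : H) (hx : ‖x‖ = 1) :
    ‖V * ((innerSL ℂ x).smulRight x) - ((innerSL ℂ x).smulRight x) * V‖ =
      Real.sqrt (1 - ‖(inner ℂ x (V x) : ℂ)‖ ^ 2) := by
  have hVx : ‖V x‖ = 1 := by rw [norm_map_of_mem_unitary hV, hx]
  rw [← rankOne_def, CStarRing.norm_commutator_eq_norm_conj_sub hV, mul_rankOne_mul_star,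
    norm_rankOne_self_sub_rankOne_self hx hVx]
end

section
/- Let V₁, V₂ be unitary operators on a complex Hilbert space of dimension at least 2 such that ‖[V₁,P]‖ = ‖[V₂,P]‖ (operator norm) for every rank-one projection P. Then there exists a unimodular scalar z such that V₂ = z·V₁ or V₂ = z·V₁*. -/
/-!
For a unitary `V` and a unit vector `x`, the commutator of `V` with `x ⊗ x` has norm
`√(1 - |⟪x, V x⟫|²)`, so the hypothesis says `|⟪z, V₁ z⟫| = |⟪z, V₂ z⟫|` for every `z`.
Comparing the `t²`-coefficients of `|⟪y + t x, Vᵢ (y + t x)⟫|²` gives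
`⟪V₁ y, x⟫ ⟪V₁⋆ y, x⟫ = ⟪V₂ y, x⟫ ⟪V₂⋆ y, x⟫` for all `x`, so `V₂ y` or `V₂⋆ y` is a multiple of
`V₁ y`: every vector is an eigenvector of `V₁⋆ V₂` or of `V₁⋆ V₂⋆`. Over an infinite field the
eigenvectors of two operators cover the space only if one of them is a homothety, and a unitary
homothety is multiplication by a unimodular scalar.
-/

open ComplexConjugate

open Polynomial in
theorem eq_zero_of_infinite_setOf_quadratic_eq_zero {K : Type*} [Field K] {α β γ : K}
    (h : {t : K | α + β * t + γ * t ^ 2 = 0}.Infinite) : α = 0 ∧ β = 0 ∧ γ = 0 := by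
  have hp : C α + C β * X + C γ * X ^ 2 = 0 :=
    eq_zero_of_infinite_isRoot _ (by simpa using h)
  refine ⟨?_, ?_, ?_⟩
  · simpa using congrArg (coeff · 0) hp
  · simpa using congrArg (coeff · 1) hp
  · simpa using congrArg (coeff · 2) hp

section LinearAlgebra

variable {K V : Type*} [Field K] [AddCommGroup V] [Module K V]

theorem Submodule.le_ker_or_le_ker_of_forall_mul_eq_zero {p : Submodule K V}
    {φ ψ : Module.Dual K V} (h : ∀ x ∈ p, φ x * ψ x = 0) :
    p ≤ LinearMap.ker φ ∨ p ≤ LinearMap.ker ψ := by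
  by_contra hcon
  simp only [not_or, SetLike.not_le_iff_exists, LinearMap.mem_ker] at hcon
  obtain ⟨⟨x, hx, hφx⟩, ⟨y, hy, hψy⟩⟩ := hcon
  have hψx : ψ x = 0 := (mul_eq_zero.mp (h x hx)).resolve_left hφx
  have hφy : φ y = 0 := (mul_eq_zero.mp (h y hy)).resolve_right hψy
  have := h (x + y) (p.add_mem hx hy)
  rw [map_add, map_add, hψx, hφy, add_zero, zero_add] at this
  exact mul_ne_zero hφx hψy this

theorem exists_apply_eq_smul_iff_forall_dual (f : V →ₗ[K] V) (v : V) :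
    (∃ c : K, f v = c • v) ↔ ∀ φ ψ : Module.Dual K V, φ v * ψ (f v) = ψ v * φ (f v) := by
  constructor
  · rintro ⟨c, hc⟩ φ ψ
    rw [hc, map_smul, map_smul, smul_eq_mul, smul_eq_mul]
    ring
  · intro h
    rcases eq_or_ne v 0 with rfl | hv
    · exact ⟨0, by simp⟩
    obtain ⟨φ, hφ⟩ := Module.Projective.exists_dual_eq_one K hv
    refine ⟨φ (f v), sub_eq_zero.mp <|
      (Module.forall_dual_apply_eq_zero_iff K _).mp fun ψ => ?_⟩
    have := h φ ψ
    rw [hφ] at this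
    simp only [map_sub, map_smul, smul_eq_mul]
    linear_combination this

theorem exists_apply_eq_smul_of_infinite_setOf_add_smul (f : V →ₗ[K] V) {v w : V}
    (h : {t : K | ∃ c : K, f (v + t • w) = c • (v + t • w)}.Infinite) :
    (∃ c : K, f v = c • v) ∧ ∃ c : K, f w = c • w := by
  simp only [exists_apply_eq_smul_iff_forall_dual] at h ⊢
  -- the minors of the pair `(v + t • w, f (v + t • w))` are quadratic in `t`
  have key (φ ψ : Module.Dual K V) :=
    eq_zero_of_infinite_setOf_quadratic_eq_zero (α := φ v * ψ (f v) - ψ v * φ (f v))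
      (β := φ v * ψ (f w) + φ w * ψ (f v) - ψ v * φ (f w) - ψ w * φ (f v))
      (γ := φ w * ψ (f w) - ψ w * φ (f w)) <|
        h.mono fun t (ht : ∀ φ ψ : Module.Dual K V, _) => by
          have := ht φ ψ
          simp only [map_add, map_smul, smul_eq_mul] at this
          show _ = (0 : K)
          linear_combination this
  exact ⟨fun φ ψ => sub_eq_zero.mp (key φ ψ).1, fun φ ψ => sub_eq_zero.mp (key φ ψ).2.2⟩

theorem exists_eq_smul_one_or_of_forall_exists_apply_eq_smul_or [Infinite K]
    (f g : V →ₗ[K] V)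
    (h : ∀ v, (∃ c : K, f v = c • v) ∨ ∃ c : K, g v = c • v) :
    (∃ c : K, f = c • 1) ∨ ∃ c : K, g = c • 1 := by
  have homothety (f : V →ₗ[K] V) (hf : ∀ v, ∃ c : K, f v = c • v) : ∃ c : K, f = c • 1 :=
    LinearMap.exists_eq_smul_id_of_forall_notLinearIndependent fun v hli => by
      obtain ⟨c, hc⟩ := hf v
      have := LinearIndependent.pair_iff.mp hli c (-1) (by rw [hc]; module)
      exact one_ne_zero (neg_eq_zero.mp this.2)
  refine (?_ : (∀ v, ∃ c : K, f v = c • v) ∨ ∀ v, ∃ c : K, g v = c • v).imp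
    (homothety f) (homothety g)
  by_contra hfg
  simp only [not_or, not_forall] at hfg
  obtain ⟨⟨v, hv⟩, ⟨w, hw⟩⟩ := hfg
  have hcover : {t : K | ∃ c : K, f (v + t • w) = c • (v + t • w)} ∪
      {t : K | ∃ c : K, g (v + t • w) = c • (v + t • w)} = Set.univ :=
    Set.eq_univ_of_forall fun t => h (v + t • w)
  rcases Set.infinite_union.mp (hcover ▸ Set.infinite_univ) with hf | hg
  · exact hv (exists_apply_eq_smul_of_infinite_setOf_add_smul f hf).1
  · exact hw (exists_apply_eq_smul_of_infinite_setOf_add_smul g hg).2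

end LinearAlgebra

section InnerProduct

variable {𝕜 E : Type*} [RCLike 𝕜] [NormedAddCommGroup E] [InnerProductSpace 𝕜 E]

local notation "⟪" x ", " y "⟫" => inner 𝕜 x y

theorem mem_span_singleton_or_of_forall_inner_mul_inner_eq {u v u' v' : E}
    (h : ∀ x, ⟪u, x⟫ * ⟪v, x⟫ = ⟪u', x⟫ * ⟪v', x⟫) : u ∈ 𝕜 ∙ u' ∨ v ∈ 𝕜 ∙ u' := by
  have hprod : ∀ x ∈ (𝕜 ∙ u')ᗮ, innerₛₗ 𝕜 u x * innerₛₗ 𝕜 v x = 0 := fun x hx => by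
    rw [innerₛₗ_apply_apply, innerₛₗ_apply_apply, h,
      Submodule.mem_orthogonal_singleton_iff_inner_right.mp hx, zero_mul]
  have mem (w : E) (hw : (𝕜 ∙ u')ᗮ ≤ LinearMap.ker (innerₛₗ 𝕜 w)) : w ∈ 𝕜 ∙ u' := by
    rw [← Submodule.orthogonal_orthogonal (𝕜 ∙ u')]
    exact fun x hx => inner_eq_zero_symm.mp (hw hx)
  exact (Submodule.le_ker_or_le_ker_of_forall_mul_eq_zero hprod).imp (mem u) (mem v)

theorem norm_inner_map_self_eq_of_forall_norm_eq_one {A B : E →ₗ[𝕜] E}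
    (h : ∀ x : E, ‖x‖ = 1 → ‖⟪x, A x⟫‖ = ‖⟪x, B x⟫‖) (x : E) : ‖⟪x, A x⟫‖ = ‖⟪x, B x⟫‖ := by
  have hscale (T : E →ₗ[𝕜] E) (r : 𝕜) (u : E) :
      ‖⟪r • u, T (r • u)⟫‖ = ‖r‖ ^ 2 * ‖⟪u, T u⟫‖ := by
    rw [map_smul, inner_smul_left, inner_smul_right, norm_mul, norm_mul, RCLike.norm_conj]
    ring
  rcases eq_or_ne x 0 with rfl | hx
  · simp
  have hx' : x = (‖x‖ : 𝕜) • (‖x‖⁻¹ : 𝕜) • x := by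
    rw [smul_smul, mul_inv_cancel₀ (by simpa using hx), one_smul]
  rw [hx', hscale A, hscale B, h _ (norm_smul_inv_norm hx)]

theorem norm_sub_inner_smul_sq {x : E} (hx : ‖x‖ = 1) (v : E) :
    ‖v - ⟪x, v⟫ • x‖ ^ 2 = ‖v‖ ^ 2 - ‖⟪x, v⟫‖ ^ 2 := by
  have hre : RCLike.re ⟪v, ⟪x, v⟫ • x⟫ = ‖⟪x, v⟫‖ ^ 2 := by
    rw [inner_smul_right, ← inner_conj_symm, RCLike.conj_mul, RCLike.norm_conj,
      ← RCLike.ofReal_pow, RCLike.ofReal_re]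
  rw [@norm_sub_sq 𝕜, hre, norm_smul, hx]
  ring

theorem norm_smulRight_sub_smulRight {x w w' : E} (hx : ‖x‖ = 1) (hw : ⟪x, w⟫ = 0)
    (hw' : ⟪x, w'⟫ = 0) (hle : ‖w'‖ ≤ ‖w‖) :
    ‖(innerSL 𝕜 x).smulRight w - (innerSL 𝕜 w').smulRight x‖ = ‖w‖ := by
  set C := (innerSL 𝕜 x).smulRight w - (innerSL 𝕜 w').smulRight x
  have hC (y : E) : C y = ⟪x, y⟫ • w - ⟪w', y⟫ • x := by simp [C]
  refine le_antisymm (C.opNorm_le_bound (norm_nonneg w) fun y => ?_) ?_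
  · have hCy : ‖C y‖ ^ 2 = ‖⟪x, y⟫‖ ^ 2 * ‖w‖ ^ 2 + ‖⟪w', y⟫‖ ^ 2 := by
      rw [hC, @norm_sub_sq 𝕜, inner_smul_left, inner_smul_right, inner_eq_zero_symm.mp hw,
        norm_smul, norm_smul, hx]
      simp only [mul_zero, map_zero, sub_zero, mul_one]
      ring
    have hw'y : ‖⟪w', y⟫‖ ^ 2 ≤ ‖w‖ ^ 2 * (‖y‖ ^ 2 - ‖⟪x, y⟫‖ ^ 2) := by
      have : ⟪w', y⟫ = ⟪w', y - ⟪x, y⟫ • x⟫ := by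
        rw [inner_sub_right, inner_smul_right, inner_eq_zero_symm.mp hw', mul_zero, sub_zero]
      rw [this, ← norm_sub_inner_smul_sq hx y, ← mul_pow]
      gcongr
      exact (norm_inner_le_norm _ _).trans (by gcongr)
    refine (pow_le_pow_iff_left₀ (norm_nonneg _) (by positivity) two_ne_zero).mp ?_
    rw [hCy, mul_pow]
    linarith
  · have hxx : ⟪x, x⟫ = 1 := by simp [inner_self_eq_norm_sq_to_K, hx]
    calc ‖w‖ = ‖C x‖ := by
          rw [hC, hxx, inner_eq_zero_symm.mp hw', one_smul, zero_smul, sub_zero]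
      _ ≤ ‖C‖ * ‖x‖ := C.le_opNorm x
      _ = ‖C‖ := by rw [hx, mul_one]

open ContinuousLinearMap in
theorem norm_commutator_smulRight_sq [CompleteSpace E] {V : E →L[𝕜] E}
    (hV : V ∈ unitary (E →L[𝕜] E)) {x : E} (hx : ‖x‖ = 1) :
    ‖V * (innerSL 𝕜 x).smulRight x - (innerSL 𝕜 x).smulRight x * V‖ ^ 2 =
      1 - ‖⟪x, V x⟫‖ ^ 2 := by
  set a := ⟪x, V x⟫
  have hxx : ⟪x, x⟫ = 1 := by simp [inner_self_eq_norm_sq_to_K, hx]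
  have hadj : ⟪x, adjoint V x⟫ = conj a := by rw [← inner_conj_symm, adjoint_inner_left]
  have hVx : ‖V x‖ = 1 := by rw [norm_map_of_mem_unitary hV, hx]
  have hV'x : ‖adjoint V x‖ = 1 := by
    rw [← star_eq_adjoint, norm_map_of_mem_unitary (Unitary.star_mem hV), hx]
  have hcomm : V * (innerSL 𝕜 x).smulRight x - (innerSL 𝕜 x).smulRight x * V =
      (innerSL 𝕜 x).smulRight (V x - a • x) -
        (innerSL 𝕜 (adjoint V x - conj a • x)).smulRight x := by
    ext y
    simp only [sub_apply, mul_apply_eq_comp, smulRight_apply, innerSL_apply_apply, map_smul,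
      inner_sub_left, inner_smul_left, adjoint_inner_left, RCLike.conj_conj]
    module
  have hw := norm_sub_inner_smul_sq (𝕜 := 𝕜) hx (V x)
  have hw' := norm_sub_inner_smul_sq (𝕜 := 𝕜) hx (adjoint V x)
  rw [hadj, RCLike.norm_conj, hV'x, ← hVx, ← hw] at hw'
  rw [hVx] at hw
  rw [hcomm, norm_smulRight_sub_smulRight hx, hw, one_pow]
  · rw [inner_sub_right, inner_smul_right, hxx, mul_one]
    exact sub_self a
  · rw [inner_sub_right, inner_smul_right, hxx, mul_one, hadj, sub_self]
  · exact (pow_le_pow_iff_left₀ (norm_nonneg _) (norm_nonneg _) two_ne_zero).mp hw'.le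

theorem norm_inner_apply_self_eq_of_norm_commutator_eq [CompleteSpace E] {V W : E →L[𝕜] E}
    (hV : V ∈ unitary (E →L[𝕜] E)) (hW : W ∈ unitary (E →L[𝕜] E)) {x : E} (hx : ‖x‖ = 1)
    (h : ‖V * (innerSL 𝕜 x).smulRight x - (innerSL 𝕜 x).smulRight x * V‖ =
      ‖W * (innerSL 𝕜 x).smulRight x - (innerSL 𝕜 x).smulRight x * W‖) :
    ‖⟪x, V x⟫‖ = ‖⟪x, W x⟫‖ := by
  have hsq := congrArg (· ^ 2) h
  simp only [norm_commutator_smulRight_sq hV hx, norm_commutator_smulRight_sq hW hx] at hsq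
  exact (sq_eq_sq₀ (norm_nonneg _) (norm_nonneg _)).mp (by linarith)

theorem exists_star_apply_eq_smul_of_mem_span_singleton [CompleteSpace E] {U : E →L[𝕜] E}
    (hU : U ∈ unitary (E →L[𝕜] E)) {w y : E} (hw : w ∈ 𝕜 ∙ U y) :
    ∃ c : 𝕜, star U w = c • y := by
  obtain ⟨c, rfl⟩ := Submodule.mem_span_singleton.mp hw
  refine ⟨c, ?_⟩
  rw [map_smul, ← mul_apply_eq_comp, Unitary.star_mul_self_of_mem hU, one_apply_eq_self]

end InnerProduct

section Polarization

variable {E : Type*} [NormedAddCommGroup E] [InnerProductSpace ℂ E]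

open Complex in
theorem mul_conj_eq_of_forall_norm_eq {α β γ δ α' β' γ' δ' : ℂ}
    (h : ∀ t : ℂ, ‖α + t * β + conj t * γ + t * conj t * δ‖ =
      ‖α' + t * β' + conj t * γ' + t * conj t * δ'‖) :
    β * conj γ = β' * conj γ' := by
  -- `β * conj γ` is the `t ^ 2`-coefficient of the squared modulus; averaging against `conj t ^ 2`
  -- over `t ∈ {±1, ±I}` and over `t ∈ {±1 ± I}` isolates it.
  have hsq (t : ℂ) := congrArg (fun r : ℝ => (r : ℂ) ^ 2) (h t)
  simp only [← mul_conj', map_add, map_mul, conj_conj] at hsq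
  have h₁ := hsq 1
  have h₂ := hsq I
  have h₃ := hsq (-1)
  have h₄ := hsq (-I)
  have h₅ := hsq (1 + I)
  have h₆ := hsq (-1 + I)
  have h₇ := hsq (-1 - I)
  have h₈ := hsq (1 - I)
  simp only [map_add, map_sub, map_neg, map_one, conj_I] at h₁ h₂ h₃ h₄ h₅ h₆ h₇ h₈
  linear_combination (norm := ring_nf)
    (h₁ - h₂ + h₃ - h₄) / 8 + I / 16 * (-h₅ + h₆ - h₇ + h₈)
  simp only [I_sq, I_pow_four]
  ring

theorem inner_map_mul_inner_map_eq_of_forall_norm_inner_self_eq {A B : E →ₗ[ℂ] E}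
    (h : ∀ z, ‖inner ℂ z (A z)‖ = ‖inner ℂ z (B z)‖) (x y : E) :
    inner ℂ (A y) x * inner ℂ y (A x) = inner ℂ (B y) x * inner ℂ y (B x) := by
  have expand (T : E →ₗ[ℂ] E) (t : ℂ) : inner ℂ (y + t • x) (T (y + t • x)) =
      inner ℂ y (T y) + t * inner ℂ y (T x) + conj t * inner ℂ x (T y) +
        t * conj t * inner ℂ x (T x) := by
    simp only [map_add, map_smul, inner_add_left, inner_add_right, inner_smul_left,
      inner_smul_right]
    ring
  have := mul_conj_eq_of_forall_norm_eq fun t => by simpa only [expand] using h (y + t • x)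
  rwa [inner_conj_symm, inner_conj_symm, mul_comm, mul_comm (inner ℂ y (B x))] at this

end Polarization

section Unitary

variable {𝕜 A : Type*}

theorem eq_smul_of_star_mul_eq_smul_one [Monoid A] [StarMul A] [SMul 𝕜 A]
    [SMulCommClass 𝕜 A A] {U W : A} {c : 𝕜} (hU : U ∈ unitary A) (h : star U * W = c • 1) :
    W = c • U := by
  rw [← one_mul W, ← Unitary.mul_star_self_of_mem hU, mul_assoc, h, mul_smul_comm, mul_one]

theorem norm_eq_one_of_smul_one_mem_unitary [NontriviallyNormedField 𝕜] [NormedRing A]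
    [StarRing A] [CStarRing A] [NormedAlgebra 𝕜 A] [Nontrivial A] {c : 𝕜}
    (h : c • (1 : A) ∈ unitary A) : ‖c‖ = 1 := by
  rw [← CStarRing.norm_of_mem_unitary h, norm_smul, CStarRing.norm_one, mul_one]

end Unitary

open ContinuousLinearMap in
theorem stmt16_general {H : Type*} [NormedAddCommGroup H] [InnerProductSpace ℂ H]
    [CompleteSpace H]
    (V₁ V₂ : H →L[ℂ] H) (hV₁ : V₁ ∈ unitary (H →L[ℂ] H)) (hV₂ : V₂ ∈ unitary (H →L[ℂ] H))
    (h : ∀ x : H, ‖x‖ = 1 →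
      ‖V₁ * ((innerSL ℂ x).smulRight x) - ((innerSL ℂ x).smulRight x) * V₁‖ =
        ‖V₂ * ((innerSL ℂ x).smulRight x) - ((innerSL ℂ x).smulRight x) * V₂‖) :
    ∃ z : ℂ, ‖z‖ = 1 ∧ (V₂ = z • V₁ ∨ V₂ = z • star V₁) := by
  rcases subsingleton_or_nontrivial H with hH | hH
  · exact ⟨1, norm_one, Or.inl (Subsingleton.elim _ _)⟩
  have hnorm := norm_inner_map_self_eq_of_forall_norm_eq_one
    (A := (V₁ : H →ₗ[ℂ] H)) (B := (V₂ : H →ₗ[ℂ] H)) fun x hx =>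
      norm_inner_apply_self_eq_of_norm_commutator_eq hV₁ hV₂ hx (h x hx)
  have heigen (y : H) :
      (∃ c : ℂ, (star V₁ * V₂) y = c • y) ∨ ∃ c : ℂ, (star V₁ * star V₂) y = c • y := by
    have hprod (x : H) : inner ℂ (V₂ y) x * inner ℂ (star V₂ y) x =
        inner ℂ (V₁ y) x * inner ℂ (star V₁ y) x := by
      simp only [star_eq_adjoint, adjoint_inner_left]
      exact (inner_map_mul_inner_map_eq_of_forall_norm_inner_self_eq hnorm x y).symm
    exact (mem_span_singleton_or_of_forall_inner_mul_inner_eq hprod).imp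
      (exists_star_apply_eq_smul_of_mem_span_singleton hV₁)
      (exists_star_apply_eq_smul_of_mem_span_singleton hV₁)
  rcases exists_eq_smul_one_or_of_forall_exists_apply_eq_smul_or
    ((star V₁ * V₂ : H →L[ℂ] H) : H →ₗ[ℂ] H) (star V₁ * star V₂ : H →L[ℂ] H) heigen with
    ⟨c, hc⟩ | ⟨c, hc⟩
  · replace hc : star V₁ * V₂ = c • 1 := coe_injective (by simpa using hc)
    exact ⟨c, norm_eq_one_of_smul_one_mem_unitary (hc ▸ mul_mem (Unitary.star_mem hV₁) hV₂),
      Or.inl (eq_smul_of_star_mul_eq_smul_one hV₁ hc)⟩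
  · replace hc : star V₁ * star V₂ = c • 1 := coe_injective (by simpa using hc)
    refine ⟨conj c, ?_, Or.inr ?_⟩
    · rw [RCLike.norm_conj]
      exact norm_eq_one_of_smul_one_mem_unitary
        (hc ▸ mul_mem (Unitary.star_mem hV₁) (Unitary.star_mem hV₂))
    · rw [← star_star V₂, eq_smul_of_star_mul_eq_smul_one hV₁ hc, star_smul]
      rfl

/-- If two unitaries `V₁`, `V₂` on a complex Hilbert space of dimension `≥ 2` satisfy
`‖[V₁,P]‖ = ‖[V₂,P]‖` for all rank-one projections `P = x⊗x`, then `V₂ = z·V₁` or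
`V₂ = z·V₁*` for some unimodular `z`. -/
theorem stmt16 {H : Type*} [NormedAddCommGroup H] [InnerProductSpace ℂ H]
    [CompleteSpace H] (hdim : (2 : Cardinal) ≤ Module.rank ℂ H)
    (V₁ V₂ : H →L[ℂ] H) (hV₁ : V₁ ∈ unitary (H →L[ℂ] H)) (hV₂ : V₂ ∈ unitary (H →L[ℂ] H))
    (h : ∀ x : H, ‖x‖ = 1 →
      ‖V₁ * ((innerSL ℂ x).smulRight x) - ((innerSL ℂ x).smulRight x) * V₁‖ =
        ‖V₂ * ((innerSL ℂ x).smulRight x) - ((innerSL ℂ x).smulRight x) * V₂‖) :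
    ∃ z : ℂ, ‖z‖ = 1 ∧ (V₂ = z • V₁ ∨ V₂ = z • star V₁) :=
  stmt16_general V₁ V₂ hV₁ hV₂ h
end
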